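/- Let ξ ∈ C¹([0,T], 𝔤) and let g: [0,T] → 𝒜 be the solution of ġ(t) = g(t) ξ̇(t) with g(0) = 1 (then g(t) ∈ G for all t). Then for every t ∈ [0,T] and every a ∈ 𝒜: g(t) a g(t)⁻¹ = a + Σ_{k=1}^{κ} ∫_{0 ≤ s₁ ≤ ⋯ ≤ s_k ≤ t} (ad_{ξ̇(s₁)} ∘ ad_{ξ̇(s₂)} ∘ ⋯ ∘ ad_{ξ̇(s_k)})(a) ds₁ ⋯ ds_k. -/

import Mathlib

open MeasureTheory

/-- The ordered simplex `{0 ≤ s₁ ≤ s₂ ≤ ⋯ ≤ s_k ≤ t}` in `(Fin k → ℝ)`. -/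
def orderedSimplex (k : ℕ) (t : ℝ) : Set (Fin k → ℝ) :=
  {s | (∀ i, s i ∈ Set.Icc (0:ℝ) t) ∧ ∀ i j : Fin k, i ≤ j → s i ≤ s j}

/-!
Extend `ξ̇` continuously to `ζ : ℝ → 𝔤` and let `G 0 = 1`, `G k t = ∫₀ᵗ G (k-1) u * ad (ζ u) du`
(`dysonTerm`); by Fubini, `G k t` is the integral of `ad (ζ s₁) ⋯ ad (ζ sₖ)` over the ordered
simplex. Since `ad x` maps `𝔤 ^ m` into `𝔤 ^ (m + 1)` for `x ∈ 𝔤`, and `𝒜 = 𝔤 ^ 0 ⊔ 𝔤 ^ 1` with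
`𝔤 ^ 0 = ℝ ∙ 1`, any `κ + 1` such operators compose to zero, so the truncated Dyson series
`V = ∑_{k ≤ κ} G k` solves `V' = V ad ζ` exactly. On the other hand `g - 1` stays in `𝔤`, hence is
nilpotent, so `g` is invertible and `B t = g(t)⁻¹ (·) g(t)` solves `B' = -(ad ζ) B`. Thus `V B` is
constant, equal to `1`, and `V t = g(t) (·) g(t)⁻¹`.
-/

open Set

section Algebra

variable {R A : Type*} [CommRing R] [Ring A] [Algebra R A] {𝔤 : Submodule R A}

theorem Submodule.mul_mem_of_isCompl_one (hcompl : IsCompl (1 : Submodule R A) 𝔤)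
    (hmul : ∀ x ∈ 𝔤, ∀ y ∈ 𝔤, x * y ∈ 𝔤) (b : A) {x : A} (hx : x ∈ 𝔤) : b * x ∈ 𝔤 := by
  obtain ⟨y, hy, z, hz, rfl⟩ := Submodule.mem_sup.1 (hcompl.sup_eq_top ▸ Submodule.mem_top (x := b))
  obtain ⟨r, rfl⟩ := (Submodule.mem_one (R := R)).1 hy
  rw [add_mul, Algebra.algebraMap_eq_smul_one, smul_mul_assoc, one_mul]
  exact add_mem (Submodule.smul_mem _ _ hx) (hmul z hz x hx)

theorem Submodule.pow_eq_bot_of_forall_prod_ofFn {n : ℕ}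
    (h : ∀ f : Fin n → A, (∀ i, f i ∈ 𝔤) → (List.ofFn f).prod = 0) : 𝔤 ^ n = ⊥ := by
  rw [Submodule.pow_eq_span_pow_set, Submodule.span_eq_bot]
  intro x hx
  obtain ⟨f, rfl⟩ := Set.mem_pow.1 hx
  exact h (fun i => f i) fun i => (f i).2

theorem Submodule.isUnit_of_sub_one_mem {n : ℕ} (h : 𝔤 ^ n = ⊥) {g : A} (hg : g - 1 ∈ 𝔤) :
    IsUnit g := by
  have : IsNilpotent (g - 1) := ⟨n, by simpa [h] using Submodule.pow_mem_pow 𝔤 hg n⟩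
  simpa using this.isUnit_one_add

end Algebra

section Ad

variable {A : Type*} [NormedRing A] [NormedAlgebra ℝ A] {𝔤 : Submodule ℝ A}

noncomputable def ad : A →L[ℝ] A →L[ℝ] A :=
  ContinuousLinearMap.mul ℝ A - (ContinuousLinearMap.mul ℝ A).flip

@[simp] theorem ad_apply (x y : A) : ad x y = x * y - y * x := rfl

theorem ad_mem_pow_succ {m : ℕ} {x a : A} (hx : x ∈ 𝔤) (ha : a ∈ 𝔤 ^ m) :
    ad x a ∈ 𝔤 ^ (m + 1) :=
  sub_mem (pow_succ' 𝔤 m ▸ Submodule.mul_mem_mul hx ha) (pow_succ 𝔤 m ▸ Submodule.mul_mem_mul ha hx)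

theorem list_prod_ad_apply_mem_pow {n m : ℕ} (x : Fin n → A) (hx : ∀ i, x i ∈ 𝔤) {a : A}
    (ha : a ∈ 𝔤 ^ m) : (List.ofFn fun i => ad (x i)).prod a ∈ 𝔤 ^ (m + n) := by
  induction n with
  | zero => simpa using ha
  | succ n ih =>
    rw [List.ofFn_succ, List.prod_cons, mul_apply_eq_comp, ← add_assoc]
    exact ad_mem_pow_succ (hx 0) (ih _ fun i => hx i.succ)

theorem list_prod_ad_eq_zero {n : ℕ} (hcompl : IsCompl (1 : Submodule ℝ A) 𝔤) (hn : 𝔤 ^ n = ⊥)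
    (x : Fin n → A) (hx : ∀ i, x i ∈ 𝔤) : (List.ofFn fun i => ad (x i)).prod = 0 := by
  ext a
  obtain ⟨y, hy, z, hz, rfl⟩ := Submodule.mem_sup.1 (hcompl.sup_eq_top ▸ Submodule.mem_top (x := a))
  have hy' := list_prod_ad_apply_mem_pow x hx (m := 0) (by rwa [pow_zero])
  have hz' := list_prod_ad_apply_mem_pow x hx (m := 1) (by rwa [pow_one])
  rw [zero_add, hn] at hy'
  rw [add_comm, pow_succ, hn, Submodule.bot_mul] at hz'
  simp [(Submodule.mem_bot ℝ).1 hy', (Submodule.mem_bot ℝ).1 hz']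

end Ad

section Calculus

variable {E : Type*} [NormedAddCommGroup E] [NormedSpace ℝ E]

theorem constant_of_hasDerivWithinAt_Icc_zero {f : ℝ → E} {a b : ℝ}
    (hf : ∀ x ∈ Icc a b, HasDerivWithinAt f 0 (Icc a b) x) : ∀ x ∈ Icc a b, f x = f a :=
  constant_of_has_deriv_right_zero (fun x hx => (hf x hx).continuousWithinAt) fun x hx =>
    (hf x (Ico_subset_Icc_self hx)).mono_of_mem_nhdsWithin
      (Filter.mem_of_superset (Icc_mem_nhdsGE hx.2) (Icc_subset_Icc_left hx.1))

theorem Submodule.mem_of_hasDerivWithinAt {p : Submodule ℝ E} (hp : IsClosed (p : Set E))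
    {f : ℝ → E} {f' : E} {s : Set ℝ} {x : ℝ} (hs : UniqueDiffWithinAt ℝ s x)
    (hfs : ∀ y ∈ s, f y ∈ p) (hf : HasDerivWithinAt f f' s x) : f' ∈ p := by
  rw [← hf.derivWithin hs]
  refine hp.closure_subset_iff.2 (Submodule.span_le.2 ?_) <|
    range_derivWithin_subset_closure_span_image f (t := s) (by simpa using subset_closure) ⟨x, rfl⟩
  rintro _ ⟨y, hy, rfl⟩
  exact hfs y hy

theorem Submodule.sub_mem_of_hasDerivWithinAt_mem [FiniteDimensional ℝ E] (p : Submodule ℝ E)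
    {f f' : ℝ → E} {a b : ℝ} (hf : ∀ x ∈ Icc a b, HasDerivWithinAt f (f' x) (Icc a b) x)
    (hf' : ∀ x ∈ Icc a b, f' x ∈ p) : ∀ x ∈ Icc a b, f x - f a ∈ p := by
  obtain ⟨q, hq⟩ := p.exists_isCompl
  let Q : E →L[ℝ] E := LinearMap.toContinuousLinearMap (q.projection p hq.symm)
  have hQ (y : E) : Q y = 0 ↔ y ∈ p := Submodule.projection_apply_eq_zero_iff hq.symm
  have hconst := constant_of_hasDerivWithinAt_Icc_zero (f := Q ∘ f) fun x hx => by
    simpa [(hQ _).2 (hf' x hx)] using Q.hasFDerivAt.comp_hasDerivWithinAt x (hf x hx)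
  intro x hx
  rw [← hQ, map_sub, sub_eq_zero]
  exact hconst x hx

theorem HasDerivWithinAt.ringInverse {R : Type*} [NormedRing R] [NormedAlgebra ℝ R]
    [CompleteSpace R] {f : ℝ → R} {f' : R} {s : Set ℝ} {x : ℝ}
    (hf : HasDerivWithinAt f f' s x) (hx : IsUnit (f x)) :
    HasDerivWithinAt (fun t => Ring.inverse (f t))
      (-(Ring.inverse (f x) * f' * Ring.inverse (f x))) s x := by
  obtain ⟨u, hu⟩ := hx
  have hinv := hasFDerivAt_ringInverse (𝕜 := ℝ) u
  rw [hu] at hinv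
  simpa [← hu, Ring.inverse_unit, Function.comp_def] using hinv.comp_hasDerivWithinAt x hf

theorem mul_eq_of_hasDerivWithinAt_mul {R : Type*} [NormedRing R] [NormedAlgebra ℝ R]
    {X Y a : ℝ → R} {b c : ℝ}
    (hX : ∀ t ∈ Icc b c, HasDerivWithinAt X (X t * a t) (Icc b c) t)
    (hY : ∀ t ∈ Icc b c, HasDerivWithinAt Y (-(a t * Y t)) (Icc b c) t) :
    ∀ t ∈ Icc b c, X t * Y t = X b * Y b :=
  constant_of_hasDerivWithinAt_Icc_zero fun t ht => by
    simpa [mul_assoc] using (hX t ht).fun_mul (hY t ht)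

end Calculus

theorem Fin.monotone_snoc_iff {α : Type*} [Preorder α] {k : ℕ} {s : Fin k → α} {u : α} :
    Monotone (Fin.snoc s u : Fin (k + 1) → α) ↔ Monotone s ∧ ∀ i, s i ≤ u := by
  refine ⟨fun h => ⟨fun i j hij => ?_, fun i => ?_⟩, fun ⟨hs, hu⟩ i j hij => ?_⟩
  · simpa using h (Fin.castSucc_le_castSucc_iff.2 hij)
  · simpa using h (Fin.le_last i.castSucc)
  · induction j using Fin.lastCases with
    | last => induction i using Fin.lastCases <;> simp [hu]
    | cast j =>
      induction i using Fin.lastCases with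
      | last => exact absurd hij (Fin.castSucc_lt_last j).not_ge
      | cast i => simpa using hs (Fin.castSucc_le_castSucc_iff.1 hij)

theorem isClosed_orderedSimplex (k : ℕ) (t : ℝ) : IsClosed (orderedSimplex k t) := by
  simp only [orderedSimplex, ofPred_and, ofPred_forall]
  exact (isClosed_iInter fun i => isClosed_Icc.preimage (continuous_apply i)).inter
    (isClosed_iInter fun i => isClosed_iInter fun j => isClosed_iInter fun _ =>
      isClosed_le (continuous_apply i) (continuous_apply j))

theorem isCompact_orderedSimplex (k : ℕ) (t : ℝ) : IsCompact (orderedSimplex k t) :=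
  (isCompact_univ_pi fun _ => isCompact_Icc).of_isClosed_subset (isClosed_orderedSimplex k t)
    fun _ hs => mem_univ_pi.2 hs.1

theorem snoc_mem_orderedSimplex_iff {k : ℕ} {t u : ℝ} {s : Fin k → ℝ} :
    Fin.snoc s u ∈ orderedSimplex (k + 1) t ↔ u ∈ Icc 0 t ∧ s ∈ orderedSimplex k u := by
  change (∀ i, _ ∈ Icc 0 t) ∧ Monotone (Fin.snoc s u : Fin (k + 1) → ℝ) ↔
    u ∈ Icc 0 t ∧ (∀ i, s i ∈ Icc 0 u) ∧ Monotone s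
  simp only [Fin.monotone_snoc_iff, Fin.forall_fin_succ', Fin.snoc_castSucc, Fin.snoc_last]
  constructor
  · rintro ⟨⟨hs, hu⟩, hmono, hsu⟩
    exact ⟨hu, fun i => ⟨(hs i).1, hsu i⟩, hmono⟩
  · rintro ⟨hu, hs, hmono⟩
    exact ⟨⟨fun i => ⟨(hs i).1, (hs i).2.trans hu.2⟩, hu⟩, hmono, fun i => (hs i).2⟩

theorem measurableSet_orderedSimplex (k : ℕ) (t : ℝ) : MeasurableSet (orderedSimplex k t) :=
  (isClosed_orderedSimplex k t).measurableSet

theorem setIntegral_orderedSimplex_succ {E : Type*} [NormedAddCommGroup E] [NormedSpace ℝ E]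
    {k : ℕ} {t : ℝ} (ht : 0 ≤ t) {f : (Fin (k + 1) → ℝ) → E}
    (hf : IntegrableOn f (orderedSimplex (k + 1) t)) :
    ∫ s in orderedSimplex (k + 1) t, f s =
      ∫ u in (0 : ℝ)..t, ∫ s in orderedSimplex k u, f (Fin.snoc s u) := by
  let e := (MeasurableEquiv.piFinSuccAbove (fun _ : Fin (k + 1) => ℝ) (Fin.last k)).symm
  have he (p : ℝ × (Fin k → ℝ)) : e p = Fin.snoc p.2 p.1 := Fin.insertNth_last' p.1 p.2
  have hmp : MeasurePreserving e (volume.prod volume) volume :=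
    (volume_preserving_piFinSuccAbove (fun _ : Fin (k + 1) => ℝ) (Fin.last k)).symm
  let F := (orderedSimplex (k + 1) t).indicator f
  have hF : Integrable (F ∘ e) (volume.prod volume) :=
    (hmp.integrable_comp_emb e.measurableEmbedding).2
      (hf.integrable_indicator (measurableSet_orderedSimplex _ _))
  have hslice (u : ℝ) : ∫ s, F (e (u, s)) =
      (Icc 0 t).indicator (fun u => ∫ s in orderedSimplex k u, f (Fin.snoc s u)) u := by
    simp only [he]
    by_cases hu : u ∈ Icc 0 t
    · rw [indicator_of_mem hu, ← integral_indicator (measurableSet_orderedSimplex _ _)]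
      congr 1 with s
      by_cases hs : s ∈ orderedSimplex k u
      · rw [indicator_of_mem hs]
        exact indicator_of_mem (snoc_mem_orderedSimplex_iff.2 ⟨hu, hs⟩) f
      · rw [indicator_of_notMem hs]
        exact indicator_of_notMem (fun h => hs (snoc_mem_orderedSimplex_iff.1 h).2) f
    · rw [indicator_of_notMem hu, ← integral_zero (Fin k → ℝ) E]
      congr 1 with s
      exact indicator_of_notMem (fun h => hu (snoc_mem_orderedSimplex_iff.1 h).1) _
  calc ∫ s in orderedSimplex (k + 1) t, f s = ∫ p, F (e p) ∂(volume.prod volume) := by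
        rw [hmp.integral_comp', integral_indicator (measurableSet_orderedSimplex _ _)]
    _ = ∫ u, ∫ s, F (e (u, s)) := integral_prod _ hF
    _ = _ := by
        simp only [hslice]
        rw [integral_indicator measurableSet_Icc, integral_Icc_eq_integral_Ioc,
          ← intervalIntegral.integral_of_le ht]

theorem continuous_list_prod_ofFn_comp {X M : Type*} [TopologicalSpace X] [TopologicalSpace M]
    [Monoid M] [ContinuousMul M] {a : X → M} (ha : Continuous a) (k : ℕ) :
    Continuous fun s : Fin k → X => (List.ofFn fun i => a (s i)).prod := by
  simp only [List.ofFn_eq_map]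
  exact continuous_list_prod _ fun i _ => ha.comp (continuous_apply i)

section Dyson

variable {R : Type*} [NormedRing R] [NormedAlgebra ℝ R]

noncomputable def dysonTerm (a : ℝ → R) : ℕ → ℝ → R
  | 0 => fun _ => 1
  | k + 1 => fun t => ∫ u in (0 : ℝ)..t, dysonTerm a k u * a u

variable {a : ℝ → R}

theorem dysonTerm_zero (t : ℝ) : dysonTerm a 0 t = 1 := rfl

theorem dysonTerm_succ_zero (k : ℕ) : dysonTerm a (k + 1) 0 = 0 :=
  intervalIntegral.integral_same

theorem continuous_dysonTerm (ha : Continuous a) (k : ℕ) : Continuous (dysonTerm a k) := by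
  induction k with
  | zero => exact continuous_const
  | succ k ih =>
    exact intervalIntegral.continuous_primitive (fun _ _ => (ih.mul ha).intervalIntegrable _ _) 0

theorem hasDerivAt_dysonTerm_succ [CompleteSpace R] (ha : Continuous a) (k : ℕ) (t : ℝ) :
    HasDerivAt (dysonTerm a (k + 1)) (dysonTerm a k t * a t) t :=
  ((continuous_dysonTerm ha k).mul ha).integral_hasStrictDerivAt 0 t |>.hasDerivAt

theorem dysonTerm_eq_setIntegral [CompleteSpace R] (ha : Continuous a) (k : ℕ) {t : ℝ}
    (ht : 0 ≤ t) :
    dysonTerm a k t = ∫ s in orderedSimplex k t, (List.ofFn fun i => a (s i)).prod := by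
  induction k generalizing t with
  | zero =>
    have : orderedSimplex 0 t = univ := by ext s; simp [orderedSimplex]
    simp [this, dysonTerm, measureReal_def, volume_pi]
  | succ k ih =>
    have hint (u : ℝ) : IntegrableOn (fun s : Fin k → ℝ => (List.ofFn fun i => a (s i)).prod)
        (orderedSimplex k u) :=
      (continuous_list_prod_ofFn_comp ha k).continuousOn.integrableOn_compact
        (isCompact_orderedSimplex k u)
    rw [setIntegral_orderedSimplex_succ ht ((continuous_list_prod_ofFn_comp ha (k + 1))
      |>.continuousOn.integrableOn_compact (isCompact_orderedSimplex _ t))]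
    refine intervalIntegral.integral_congr fun u hu => ?_
    rw [uIcc_of_le ht] at hu
    simp only [ih hu.1, List.ofFn_succ', List.prod_concat, Fin.snoc_castSucc, Fin.snoc_last]
    exact (integral_mul_const_of_integrable (hint u)).symm

theorem dysonTerm_mul_eq_zero [CompleteSpace R] (ha : Continuous a) {N : ℕ}
    (hnil : ∀ s : Fin (N + 1) → ℝ, (List.ofFn fun i => a (s i)).prod = 0) {t : ℝ} (ht : 0 ≤ t) :
    dysonTerm a N t * a t = 0 := by
  have hsnoc (s : Fin N → ℝ) : (List.ofFn fun i => a (s i)).prod * a t = 0 := by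
    have h := hnil (Fin.snoc s t)
    rw [List.ofFn_succ', List.prod_concat] at h
    simpa using h
  rw [dysonTerm_eq_setIntegral ha N ht, ← integral_mul_const_of_integrable
    ((continuous_list_prod_ofFn_comp ha N).continuousOn.integrableOn_compact
      (isCompact_orderedSimplex N t))]
  simp [hsnoc]

theorem hasDerivAt_sum_range_dysonTerm [CompleteSpace R] (ha : Continuous a) {N : ℕ}
    (hnil : ∀ s : Fin (N + 1) → ℝ, (List.ofFn fun i => a (s i)).prod = 0) {t : ℝ} (ht : 0 ≤ t) :
    HasDerivAt (fun t => ∑ k ∈ Finset.range (N + 1), dysonTerm a k t)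
      ((∑ k ∈ Finset.range (N + 1), dysonTerm a k t) * a t) t := by
  have hsum : (fun t => ∑ k ∈ Finset.range (N + 1), dysonTerm a k t) =
      fun t => 1 + ∑ k ∈ Finset.range N, dysonTerm a (k + 1) t := by
    funext t
    rw [Finset.sum_range_succ', add_comm]
    rfl
  rw [hsum, Finset.sum_mul, Finset.sum_range_succ, dysonTerm_mul_eq_zero ha hnil ht, add_zero]
  exact (HasDerivAt.fun_sum fun k _ => hasDerivAt_dysonTerm_succ ha k t).const_add 1

end Dyson

theorem List.foldr_comp_ofFn_coe {M : Type*} [NormedAddCommGroup M] [NormedSpace ℝ M] {k : ℕ}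
    (f : Fin k → M →L[ℝ] M) :
    (List.ofFn fun i => ⇑(f i)).foldr (· ∘ ·) id = ⇑(List.ofFn f).prod := by
  induction k with
  | zero => rfl
  | succ k ih => simp [List.ofFn_succ, ih]

theorem sum_range_dysonTerm_apply {M : Type*} [NormedAddCommGroup M] [NormedSpace ℝ M]
    [CompleteSpace M] {a : ℝ → M →L[ℝ] M} (ha : Continuous a) (N : ℕ) {t : ℝ} (ht : 0 ≤ t)
    (x : M) :
    (∑ k ∈ Finset.range (N + 1), dysonTerm a k t) x = x + ∑ k ∈ Finset.Icc 1 N,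
      ∫ s in orderedSimplex k t, ((List.ofFn fun i => ⇑(a (s i))).foldr (· ∘ ·) id) x := by
  rw [sum_apply, Finset.sum_range_succ', add_comm, ← Finset.Ico_add_one_right_eq_Icc,
    Finset.sum_Ico_eq_sum_range, Nat.add_sub_cancel]
  congr 1
  refine Finset.sum_congr rfl fun k _ => ?_
  rw [add_comm 1 k, dysonTerm_eq_setIntegral ha _ ht, ContinuousLinearMap.integral_apply
    ((continuous_list_prod_ofFn_comp ha _).continuousOn.integrableOn_compact
      (isCompact_orderedSimplex _ t))]
  simp only [List.foldr_comp_ofFn_coe]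

section Conjugation

variable {A : Type*} [NormedRing A] [NormedAlgebra ℝ A] [CompleteSpace A]

theorem hasDerivWithinAt_mulLeftRight_ringInverse {g : ℝ → A} {x : A} {s : Set ℝ} {t : ℝ}
    (hg : HasDerivWithinAt g (g t * x) s t) (hunit : IsUnit (g t)) :
    HasDerivWithinAt (fun t => ContinuousLinearMap.mulLeftRight ℝ A (Ring.inverse (g t)) (g t))
      (-(ad x * ContinuousLinearMap.mulLeftRight ℝ A (Ring.inverse (g t)) (g t))) s t := by
  refine ((ContinuousLinearMap.mulLeftRight ℝ A).hasDerivWithinAt_of_bilinear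
    (hg.ringInverse hunit) hg).congr_deriv ?_
  have hinv : Ring.inverse (g t) * (g t * x) * Ring.inverse (g t) = x * Ring.inverse (g t) := by
    rw [← mul_assoc, Ring.inverse_mul_cancel _ hunit, one_mul]
  ext b
  simp only [add_apply, neg_apply, ContinuousLinearMap.mulLeftRight_apply, mul_apply_eq_comp,
    ad_apply, hinv]
  noncomm_ring

theorem mul_inverse_eq_sum_range_dysonTerm_apply {N : ℕ} {T : ℝ} {ζ g : ℝ → A}
    (hζ : Continuous ζ) (hnil : ∀ s : Fin (N + 1) → ℝ, (List.ofFn fun i => ad (ζ (s i))).prod = 0)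
    (hg0 : g 0 = 1) (hg : ∀ t ∈ Icc 0 T, HasDerivWithinAt g (g t * ζ t) (Icc 0 T) t)
    (hunit : ∀ t ∈ Icc 0 T, IsUnit (g t)) {t : ℝ} (ht : t ∈ Icc 0 T) (a : A) :
    g t * a * Ring.inverse (g t) =
      (∑ k ∈ Finset.range (N + 1), dysonTerm (fun u => ad (ζ u)) k t) a := by
  let V (t : ℝ) := ∑ k ∈ Finset.range (N + 1), dysonTerm (fun u => ad (ζ u)) k t
  let B (t : ℝ) := ContinuousLinearMap.mulLeftRight ℝ A (Ring.inverse (g t)) (g t)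
  have hVB := mul_eq_of_hasDerivWithinAt_mul (X := V) (Y := B)
    (fun t ht =>
      (hasDerivAt_sum_range_dysonTerm (ad.continuous.comp hζ) hnil ht.1).hasDerivWithinAt)
    (fun t ht => hasDerivWithinAt_mulLeftRight_ringInverse (hg t ht) (hunit t ht)) t ht
  have hVB0 : V 0 * B 0 = 1 := by
    ext b
    simp [V, B, hg0, Finset.sum_range_succ', dysonTerm_zero, dysonTerm_succ_zero]
  have hgg := Ring.inverse_mul_cancel _ (hunit t ht)
  calc g t * a * Ring.inverse (g t)
      = V t (B t (g t * a * Ring.inverse (g t))) := by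
        rw [← mul_apply_eq_comp, hVB, hVB0, one_apply_eq_self]
    _ = V t a := by
        simp only [B, ContinuousLinearMap.mulLeftRight_apply, ← mul_assoc, hgg, one_mul]
        rw [mul_assoc, hgg, mul_one]

end Conjugation

/-- if `ξ ∈ C¹([0,T],𝔤)` and `g` solves `ġ(t) = g(t) ξ̇(t)`, `g(0) = 1`,
then for all `a ∈ 𝒜`,
`g(t) a g(t)⁻¹ = a + Σ_{k=1}^{κ} ∫_{0 ≤ s₁ ≤ ⋯ ≤ s_k ≤ t}
  (ad_{ξ̇(s₁)} ∘ ⋯ ∘ ad_{ξ̇(s_k)})(a) ds`. -/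
theorem stmt7 {A : Type*} [NormedRing A] [NormedAlgebra ℝ A] [FiniteDimensional ℝ A]
    (κ : ℕ) (𝔤 : Submodule ℝ A)
    (hmul : ∀ x ∈ 𝔤, ∀ y ∈ 𝔤, x * y ∈ 𝔤)
    (hcompl : IsCompl (Submodule.span ℝ ({1} : Set A)) 𝔤)
    (hnil : ∀ f : Fin (κ + 1) → A, (∀ i, f i ∈ 𝔤) → (List.ofFn f).prod = 0)
    (T : ℝ) (hT : 0 < T) (ξ ξ' g : ℝ → A)
    (hξmem : ∀ t ∈ Set.Icc (0:ℝ) T, ξ t ∈ 𝔤)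
    (hξ : ∀ t ∈ Set.Icc (0:ℝ) T, HasDerivWithinAt ξ (ξ' t) (Set.Icc 0 T) t)
    (hξ'cont : ContinuousOn ξ' (Set.Icc 0 T))
    (hg0 : g 0 = 1)
    (hg : ∀ t ∈ Set.Icc (0:ℝ) T, HasDerivWithinAt g (g t * ξ' t) (Set.Icc 0 T) t) :
    ∀ t ∈ Set.Icc (0:ℝ) T, ∀ a : A,
      g t * a * Ring.inverse (g t)
        = a + ∑ k ∈ Finset.Icc 1 κ,
            ∫ s in orderedSimplex k t,
              ((List.ofFn fun i : Fin k =>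
                  (fun y : A => ξ' (s i) * y - y * ξ' (s i))).foldr (· ∘ ·) id) a := by
  have : CompleteSpace A := FiniteDimensional.complete ℝ A
  have hcompl₁ : IsCompl (1 : Submodule ℝ A) 𝔤 := by rwa [Submodule.one_eq_span]
  have hpow : 𝔤 ^ (κ + 1) = ⊥ := Submodule.pow_eq_bot_of_forall_prod_ofFn hnil
  have hξ'mem (t : ℝ) (ht : t ∈ Icc 0 T) : ξ' t ∈ 𝔤 := 𝔤.mem_of_hasDerivWithinAt
    (Submodule.closed_of_finiteDimensional 𝔤) (uniqueDiffOn_Icc hT t ht) hξmem (hξ t ht)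
  obtain ⟨ζ, hζ, hζξ', hζmem⟩ :
      ∃ ζ : ℝ → A, Continuous ζ ∧ EqOn ζ ξ' (Icc 0 T) ∧ ∀ t, ζ t ∈ 𝔤 :=
    ⟨IccExtend hT.le (domRestrict (Icc 0 T) ξ'), hξ'cont.domRestrict.Icc_extend',
      fun t ht => IccExtend_of_mem _ _ ht, fun t => hξ'mem _ (projIcc 0 T hT.le t).2⟩
  have hgζ (t : ℝ) (ht : t ∈ Icc 0 T) : HasDerivWithinAt g (g t * ζ t) (Icc 0 T) t := by
    rw [hζξ' ht]
    exact hg t ht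
  have hunit (t : ℝ) (ht : t ∈ Icc 0 T) : IsUnit (g t) := 𝔤.isUnit_of_sub_one_mem hpow <| by
    simpa [hg0] using 𝔤.sub_mem_of_hasDerivWithinAt_mem hg
      (fun t ht => 𝔤.mul_mem_of_isCompl_one hcompl₁ hmul _ (hξ'mem t ht)) t ht
  intro t ht a
  rw [mul_inverse_eq_sum_range_dysonTerm_apply hζ
      (fun s => list_prod_ad_eq_zero hcompl₁ hpow _ fun i => hζmem _) hg0 hgζ hunit ht,
    sum_range_dysonTerm_apply (a := fun u => ad (ζ u)) (ad.continuous.comp hζ) κ ht.1]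
  congr 1
  refine Finset.sum_congr rfl fun k _ => setIntegral_congr_fun
    (measurableSet_orderedSimplex k t) fun s hs => ?_
  simp only [hζξ' ⟨(hs.1 _).1, (hs.1 _).2.trans ht.2⟩]
  rfl
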